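/- arXiv:1108.2192 — 9 statements merged into one kernel-verified Lean document; each statement's English description precedes it below -/
import Mathlib

section
/- Let J ⊆ ℝ be an open interval (the time interval) and let G, θ : ℝ × J → ℝ be C² functions with G(r,t) > 0 for all (r,t). Suppose that for all (r,t) the complex-valued evolution equation ∂/∂t ( G(r,t) · exp(3·i·θ(r,t)) ) = ∂/∂r ( (∂/∂r exp(3·i·θ(r,t))) / G(r,t) ) holds, where exp is the complex exponential and i the imaginary unit, and the partial derivatives of the complex-valued functions are taken componentwise. Then for all (r,t): ∂G/∂t = −9 (∂θ/∂r)² / G and ∂θ/∂t = (∂²θ/∂r²)/G² − (∂G/∂r)(∂θ/∂r)/G³. -/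
open Real Complex

/-! Write `E = exp(3iθ)`. Both sides of the complex evolution equation are `E` times an explicit
complex number: the left side is `(∂ₜG + 3i G ∂ₜθ) E`, and the right side is
`((-9 (∂ᵣθ)² + 3i ∂ᵣ²θ) G - 3i ∂ᵣθ ∂ᵣG) E / G²`. Cancelling `E ≠ 0` and comparing real and
imaginary parts gives the two scalar equations. -/

section Slices

variable {𝕜 E F H : Type*} [NontriviallyNormedField 𝕜]
  [NormedAddCommGroup E] [NormedSpace 𝕜 E] [NormedAddCommGroup F] [NormedSpace 𝕜 F]
  [NormedAddCommGroup H] [NormedSpace 𝕜 H]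
  {n : WithTop ℕ∞} {f : E × F → H} {s : Set E} {t : Set F}

theorem ContDiffOn.comp_prodMk_const_right (hf : ContDiffOn 𝕜 n f (s ×ˢ t)) {y : F} (hy : y ∈ t) :
    ContDiffOn 𝕜 n (fun x => f (x, y)) s :=
  hf.comp (contDiff_id.prodMk contDiff_const).contDiffOn fun _ hx => ⟨hx, hy⟩

theorem ContDiffOn.comp_prodMk_const_left (hf : ContDiffOn 𝕜 n f (s ×ˢ t)) {x : E} (hx : x ∈ s) :
    ContDiffOn 𝕜 n (fun y => f (x, y)) t :=
  hf.comp (contDiff_const.prodMk contDiff_id).contDiffOn fun _ hy => ⟨hx, hy⟩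

end Slices

section PhaseDerivatives

variable {u φ G : ℝ → ℝ} {u' φ' G' φ'' x : ℝ} (k : ℂ)

theorem HasDerivAt.cexp_mul_I_mul_ofReal (hφ : HasDerivAt φ φ' x) :
    HasDerivAt (fun s => cexp (k * I * φ s)) (cexp (k * I * φ x) * (k * I * φ')) x :=
  (hφ.ofReal_comp.const_mul (k * I)).cexp

theorem HasDerivAt.ofReal_mul_cexp_mul_I_mul_ofReal (hu : HasDerivAt u u' x)
    (hφ : HasDerivAt φ φ' x) :
    HasDerivAt (fun s => (u s : ℂ) * cexp (k * I * φ s))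
      (u' * cexp (k * I * φ x) + u x * (cexp (k * I * φ x) * (k * I * φ'))) x :=
  hu.ofReal_comp.mul (hφ.cexp_mul_I_mul_ofReal k)

theorem deriv_cexp_mul_I_mul_ofReal (hφ : Differentiable ℝ φ) :
    deriv (fun s => cexp (k * I * φ s)) = fun s => cexp (k * I * φ s) * (k * I * deriv φ s) :=
  funext fun s => ((hφ s).hasDerivAt.cexp_mul_I_mul_ofReal k).deriv

theorem hasDerivAt_deriv_cexp_mul_I_mul_ofReal_div_ofReal (hφ : Differentiable ℝ φ)
    (hφ' : HasDerivAt (deriv φ) φ'' x) (hG : HasDerivAt G G' x) (hGx : G x ≠ 0) :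
    HasDerivAt (fun s => deriv (fun σ => cexp (k * I * φ σ)) s / G s)
      (((cexp (k * I * φ x) * (k * I * deriv φ x) * (k * I * deriv φ x)
          + cexp (k * I * φ x) * (k * I * φ'')) * (G x : ℂ)
        - cexp (k * I * φ x) * (k * I * deriv φ x) * (G' : ℂ)) / (G x : ℂ) ^ 2) x := by
  rw [deriv_cexp_mul_I_mul_ofReal k hφ]
  exact (((hφ x).hasDerivAt.cexp_mul_I_mul_ofReal k).mul
    (hφ'.ofReal_comp.const_mul (k * I))).div hG.ofReal_comp (mod_cast hGx)

end PhaseDerivatives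

theorem scalar_equations_of_phase_evolution {k g Gt θt θr θrr Gr : ℝ} {E : ℂ}
    (hk : k ≠ 0) (hg : g ≠ 0) (hE : E ≠ 0)
    (h : Gt * E + g * (E * (k * I * θt))
      = ((E * (k * I * θr) * (k * I * θr) + E * (k * I * θrr)) * g - E * (k * I * θr) * Gr)
        / (g : ℂ) ^ 2) :
    Gt = -k ^ 2 * θr ^ 2 / g ∧ θt = θrr / g ^ 2 - Gr * θr / g ^ 3 := by
  have hgC : (g : ℂ) ≠ 0 := mod_cast hg
  have hparts : ((Gt * g ^ 2 : ℝ) : ℂ) + ((k * g ^ 3 * θt : ℝ) : ℂ) * I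
      = ((-k ^ 2 * θr ^ 2 * g : ℝ) : ℂ) + ((k * (θrr * g - θr * Gr) : ℝ) : ℂ) * I := by
    refine mul_right_cancel₀ hE ?_
    rw [eq_div_iff (pow_ne_zero 2 hgC)] at h
    push_cast
    linear_combination h + k ^ 2 * (θr : ℂ) ^ 2 * g * E * I_sq
  have hre := congrArg re hparts
  have him := congrArg im hparts
  simp only [add_re, add_im, ofReal_re, ofReal_im, mul_re, mul_im, I_re, I_im, mul_zero,
    mul_one, sub_zero, zero_add, add_zero] at hre him
  have hθt : θt * g ^ 3 = θrr * g - θr * Gr := mul_left_cancel₀ hk (by linear_combination him)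
  constructor
  · rw [eq_div_iff hg]
    exact mul_right_cancel₀ hg (by linear_combination hre)
  · field_simp
    linear_combination hθt

/-- Reduction of the Laplacian coflow of a coclosed G₂-structure over a
Calabi–Yau 6-manifold to scalar PDEs: if `G(r,t) > 0` and the phase `θ(r,t)`
are C² on `ℝ × J` (J an open time interval) and satisfy the complex evolution
equation `∂ₜ(G e^{3iθ}) = ∂ᵣ((∂ᵣ e^{3iθ})/G)`, then
`∂ₜG = -9 (∂ᵣθ)²/G` and `∂ₜθ = ∂ᵣ²θ/G² - ∂ᵣG ∂ᵣθ/G³`. -/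
theorem cy_coflow_evolution_equations
    (a b : ℝ) (G θ : ℝ → ℝ → ℝ)
    (J : Set ℝ) (hJ : J = Set.Ioo a b)
    (hGsmooth : ContDiffOn ℝ 2 (fun p : ℝ × ℝ => G p.1 p.2) (Set.univ ×ˢ J))
    (hθsmooth : ContDiffOn ℝ 2 (fun p : ℝ × ℝ => θ p.1 p.2) (Set.univ ×ˢ J))
    (hGpos : ∀ r : ℝ, ∀ t ∈ J, 0 < G r t)
    (hPDE : ∀ r : ℝ, ∀ t ∈ J,
      deriv (fun s : ℝ => (G r s : ℂ) * Complex.exp (3 * Complex.I * (θ r s : ℂ))) t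
        = deriv (fun ρ : ℝ =>
            deriv (fun σ : ℝ => Complex.exp (3 * Complex.I * (θ σ t : ℂ))) ρ
              / (G ρ t : ℂ)) r) :
    ∀ r : ℝ, ∀ t ∈ J,
      deriv (fun s : ℝ => G r s) t
        = -9 * (deriv (fun ρ : ℝ => θ ρ t) r) ^ 2 / G r t ∧
      deriv (fun s : ℝ => θ r s) t
        = deriv (deriv (fun ρ : ℝ => θ ρ t)) r / (G r t) ^ 2
          - deriv (fun ρ : ℝ => G ρ t) r * deriv (fun ρ : ℝ => θ ρ t) r / (G r t) ^ 3 := by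
  intro r t ht
  have hJt : J ∈ nhds t := hJ ▸ isOpen_Ioo.mem_nhds (hJ ▸ ht)
  have hGr : ContDiff ℝ 2 (fun ρ => G ρ t) :=
    contDiffOn_univ.mp (hGsmooth.comp_prodMk_const_right ht)
  have hθr : ContDiff ℝ 2 (fun ρ => θ ρ t) :=
    contDiffOn_univ.mp (hθsmooth.comp_prodMk_const_right ht)
  have hGt : DifferentiableAt ℝ (fun s => G r s) t :=
    ((hGsmooth.comp_prodMk_const_left trivial).contDiffAt hJt).differentiableAt two_ne_zero
  have hθt : DifferentiableAt ℝ (fun s => θ r s) t :=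
    ((hθsmooth.comp_prodMk_const_left trivial).contDiffAt hJt).differentiableAt two_ne_zero
  have hPDE' := hPDE r t ht
  rw [(hGt.hasDerivAt.ofReal_mul_cexp_mul_I_mul_ofReal 3 hθt.hasDerivAt).deriv,
    (hasDerivAt_deriv_cexp_mul_I_mul_ofReal_div_ofReal 3 (hθr.differentiable two_ne_zero)
      (hθr.differentiable_deriv_two r).hasDerivAt
      ((hGr.differentiable two_ne_zero) r).hasDerivAt (hGpos r t ht).ne').deriv] at hPDE'
  obtain ⟨hG, hθ⟩ := scalar_equations_of_phase_evolution three_ne_zero (hGpos r t ht).ne' (exp_ne_zero _)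
    (mod_cast hPDE')
  exact ⟨by rw [hG]; norm_num, hθ⟩
end

section
/- Fix b, c ∈ ℝ and define θ : ℝ → ℝ by θ(r) = (2/3)·arctan(c·e^{b r}) and s : ℝ → ℝ by s(r) = b·(1 − c²·e^{2 b r})/(1 + c²·e^{2 b r}). Then for all r ∈ ℝ: (d/dr) cos(3θ(r)) − cos(3θ(r))·s(r) = −b, (d/dr) sin(3θ(r)) − sin(3θ(r))·s(r) = 0, and s(r) = b·cos(3θ(r)). -/
/-!
Put `φ = 3θ = 2 arctan (c e^{br})`. The half-angle formulas give `cos φ = (1 - c² e^{2br})/(1 + c² e^{2br})`,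
so `s = b cos φ`, and `sin φ = 2 c e^{br}/(1 + c² e^{2br})`, so `φ' = 2 b c e^{br}/(1 + c² e^{2br}) = b sin φ`.
For any `φ` with `φ' = b sin φ` the system is then an identity:
`(cos φ)' - cos φ · b cos φ = -b (sin² φ + cos² φ) = -b` and `(sin φ)' - sin φ · b cos φ = 0`.
-/

open Real

namespace Real

theorem cos_two_mul_arctan (t : ℝ) : cos (2 * arctan t) = (1 - t ^ 2) / (1 + t ^ 2) := by
  have : 1 + t ^ 2 ≠ 0 := by positivity
  rw [cos_two_mul, cos_sq_arctan]
  field_simp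
  ring

theorem sin_two_mul_arctan (t : ℝ) : sin (2 * arctan t) = 2 * t / (1 + t ^ 2) := by
  have : 1 + t ^ 2 ≠ 0 := by positivity
  rw [sin_two_mul, sin_arctan, cos_arctan, mul_assoc, div_mul_div_comm, ← sq, sq_sqrt (by positivity)]
  ring

end Real

section SinODE

variable {φ : ℝ → ℝ} {b r : ℝ}

theorem deriv_cos_comp_sub_eq_neg_of_hasDerivAt (hφ : HasDerivAt φ (b * sin (φ r)) r) :
    deriv (fun x => cos (φ x)) r - cos (φ r) * (b * cos (φ r)) = -b := by
  rw [hφ.cos.deriv]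
  linear_combination (-b) * sin_sq_add_cos_sq (φ r)

theorem deriv_sin_comp_sub_eq_zero_of_hasDerivAt (hφ : HasDerivAt φ (b * sin (φ r)) r) :
    deriv (fun x => sin (φ x)) r - sin (φ r) * (b * cos (φ r)) = 0 := by
  rw [hφ.sin.deriv]
  ring

end SinODE

theorem hasDerivAt_two_mul_arctan_mul_exp (b c r : ℝ) :
    HasDerivAt (fun x => 2 * arctan (c * exp (b * x))) (b * sin (2 * arctan (c * exp (b * r)))) r := by
  have hexp : HasDerivAt (fun x => c * exp (b * x)) (c * (exp (b * r) * b)) r :=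
    (((hasDerivAt_id r).const_mul b).exp.const_mul c).congr_deriv (by simp)
  refine (hexp.arctan.const_mul 2).congr_deriv ?_
  rw [sin_two_mul_arctan]
  ring

/-- The explicit pair `θ(r) = (2/3) arctan (c e^{br})`, `s(r) = k'(r) =
b (1 - c² e^{2br})/(1 + c² e^{2br})` solves the steady gradient soliton system
for the Laplacian coflow over a Calabi–Yau 6-manifold (with real integration
constant `b`), and `s = b cos 3θ`. -/
theorem cy_soliton_explicit_solution
    (b c : ℝ) (θ s : ℝ → ℝ)
    (hθ : ∀ r : ℝ, θ r = (2 / 3) * Real.arctan (c * Real.exp (b * r)))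
    (hs : ∀ r : ℝ, s r = b * (1 - c ^ 2 * Real.exp (2 * b * r)) / (1 + c ^ 2 * Real.exp (2 * b * r))) :
    (∀ r : ℝ, deriv (fun x => Real.cos (3 * θ x)) r - Real.cos (3 * θ r) * s r = -b) ∧
    (∀ r : ℝ, deriv (fun x => Real.sin (3 * θ x)) r - Real.sin (3 * θ r) * s r = 0) ∧
    (∀ r : ℝ, s r = b * Real.cos (3 * θ r)) := by
  have hφ : ∀ r, 3 * θ r = 2 * arctan (c * exp (b * r)) := fun r => by
    rw [hθ]
    ring
  have hs_cos : ∀ r, s r = b * cos (3 * θ r) := fun r => by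
    rw [hs, hφ, cos_two_mul_arctan, mul_pow, ← exp_nat_mul]
    ring_nf
  have hφ_deriv : ∀ r, HasDerivAt (fun x => 3 * θ x) (b * sin (3 * θ r)) r := fun r => by
    simpa only [hφ] using hasDerivAt_two_mul_arctan_mul_exp b c r
  refine ⟨fun r => ?_, fun r => ?_, hs_cos⟩
  · rw [hs_cos]
    exact deriv_cos_comp_sub_eq_neg_of_hasDerivAt (hφ_deriv r)
  · rw [hs_cos]
    exact deriv_sin_comp_sub_eq_zero_of_hasDerivAt (hφ_deriv r)
end

section
/- Let J ⊆ ℝ be an open interval and let G, h, θ : ℝ × J → ℝ be C² functions (C³ in r) with G > 0 and h > 0 everywhere. Suppose that for all (r,t): (i) ∂h/∂r = G·cos(3θ); (ii) ∂h/∂t = (1/(G h³))·∂/∂r( h³ cos(3θ) ) − 3/h; and (iii) ∂/∂t ( G h³ sin(3θ) ) = ∂/∂r( (∂/∂r (h³ sin 3θ)) / G ) − 12 G h sin(3θ). Then for all (r,t): ∂G/∂t = −3 G sin²(3θ)/h² − 9 (∂θ/∂r)²/G and ∂θ/∂t = (∂²θ/∂r²)/G² + 6 (∂θ/∂r) cos(3θ)/(h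 G) − (∂θ/∂r)(∂G/∂r)/G³ − 2 sin(3θ) cos(3θ)/h². -/
open Real Set Filter Topology

/-!
Condition (i) turns (ii) into the formula `h_t = -3 sin² 3θ / h - 3 θ_r sin 3θ / G`.
Equating the mixed partials `∂_t ∂_r h = ∂_r ∂_t h`, with `∂_r h = G cos 3θ`, and expanding
(iii) with the product rule give two linear equations for `(G_t, 3 G θ_t)` whose matrix is
the rotation by the angle `3θ`; rotating back and using `sin² + cos² = 1` yields the
evolution equations.
-/

section PartialDerivatives

variable {E : Type*} [NormedAddCommGroup E] [NormedSpace ℝ E]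

theorem HasFDerivAt.hasDerivAt_fst_slice {f : ℝ × ℝ → E} {f' : ℝ × ℝ →L[ℝ] E} {x y : ℝ}
    (hf : HasFDerivAt f f' (x, y)) : HasDerivAt (fun s => f (s, y)) (f' (1, 0)) x :=
  hf.comp_hasDerivAt x ((hasDerivAt_id x).prodMk (hasDerivAt_const x y))

theorem HasFDerivAt.hasDerivAt_snd_slice {f : ℝ × ℝ → E} {f' : ℝ × ℝ →L[ℝ] E} {x y : ℝ}
    (hf : HasFDerivAt f f' (x, y)) : HasDerivAt (fun t => f (x, t)) (f' (0, 1)) y :=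
  hf.comp_hasDerivAt y ((hasDerivAt_const y x).prodMk (hasDerivAt_id y))

variable {F : ℝ → ℝ → E} {n : WithTop ℕ∞}

theorem ContDiffOn.contDiff_fst_slice {J : Set ℝ} {t : ℝ}
    (hF : ContDiffOn ℝ n (fun p : ℝ × ℝ => F p.1 p.2) (univ ×ˢ J)) (ht : t ∈ J) :
    ContDiff ℝ n (fun r => F r t) :=
  hF.comp_contDiff (contDiff_id.prodMk contDiff_const) fun _ => ⟨trivial, ht⟩

theorem ContDiffAt.differentiableAt_snd_slice {r t : ℝ}
    (hF : ContDiffAt ℝ n (fun p : ℝ × ℝ => F p.1 p.2) (r, t)) (hn : n ≠ 0) :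
    DifferentiableAt ℝ (fun s => F r s) t :=
  (hF.differentiableAt hn).hasFDerivAt.hasDerivAt_snd_slice.differentiableAt

theorem deriv_deriv_comm_of_contDiffAt {x y : ℝ}
    (hF : ContDiffAt ℝ 2 (fun p : ℝ × ℝ => F p.1 p.2) (x, y)) :
    deriv (fun t => deriv (fun s => F s t) x) y = deriv (fun s => deriv (fun t => F s t) y) x := by
  set f := fun p : ℝ × ℝ => F p.1 p.2
  have hf : ∀ᶠ q in 𝓝 (x, y), HasFDerivAt f (fderiv ℝ f q) q := by
    filter_upwards [hF.eventually (by simp)] with q hq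
    exact (hq.differentiableAt two_ne_zero).hasFDerivAt
  have hf' : HasFDerivAt (fderiv ℝ f) (fderiv ℝ (fderiv ℝ f) (x, y)) (x, y) :=
    ((hF.fderiv_right le_rfl).differentiableAt one_ne_zero).hasFDerivAt
  have hfst : (fun t => deriv (fun s => F s t) x) =ᶠ[𝓝 y] fun t => fderiv ℝ f (x, t) (1, 0) := by
    filter_upwards [(continuous_const.prodMk continuous_id).continuousAt.eventually hf]
      with t ht using ht.hasDerivAt_fst_slice.deriv
  have hsnd : (fun s => deriv (fun t => F s t) y) =ᶠ[𝓝 x] fun s => fderiv ℝ f (s, y) (0, 1) := by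
    filter_upwards [(continuous_id.prodMk continuous_const).continuousAt.eventually hf]
      with s hs using hs.hasDerivAt_snd_slice.deriv
  have hy : HasDerivAt (fun t => fderiv ℝ f (x, t) (1, 0))
      (fderiv ℝ (fderiv ℝ f) (x, y) (0, 1) (1, 0)) y :=
    (ContinuousLinearMap.apply ℝ E ((1 : ℝ), (0 : ℝ))).hasFDerivAt.comp_hasDerivAt y
      hf'.hasDerivAt_snd_slice
  have hx : HasDerivAt (fun s => fderiv ℝ f (s, y) (0, 1))
      (fderiv ℝ (fderiv ℝ f) (x, y) (1, 0) (0, 1)) x :=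
    (ContinuousLinearMap.apply ℝ E ((0 : ℝ), (1 : ℝ))).hasFDerivAt.comp_hasDerivAt x
      hf'.hasDerivAt_fst_slice
  rw [hfst.deriv_eq, hsnd.deriv_eq, hy.deriv, hx.deriv]
  exact (hF.isSymmSndFDerivAt (by simp)).eq _ _

end PartialDerivatives

section RadialCalculus

variable {g h θ : ℝ → ℝ} {x : ℝ}

theorem coflow_ii_rhs_eq (hh : HasDerivAt h (g x * cos (3 * θ x)) x)
    (hθ : DifferentiableAt ℝ θ x) (hg₀ : g x ≠ 0) (hh₀ : h x ≠ 0) :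
    1 / (g x * h x ^ 3) * deriv (fun y => h y ^ 3 * cos (3 * θ y)) x - 3 / h x
      = -3 * sin (3 * θ x) ^ 2 / h x - 3 * deriv θ x * sin (3 * θ x) / g x := by
  rw [((hh.fun_pow 3).fun_mul (hθ.hasDerivAt.const_mul 3).cos).deriv]
  field_simp
  linear_combination 3 * g x * h x ^ 2 * sin_sq_add_cos_sq (3 * θ x)

theorem hasDerivAt_coflow_ht (hh : HasDerivAt h (g x * cos (3 * θ x)) x)
    (hθ : DifferentiableAt ℝ θ x) (hθ' : DifferentiableAt ℝ (deriv θ) x)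
    (hg : DifferentiableAt ℝ g x) (hg₀ : g x ≠ 0) (hh₀ : h x ≠ 0) :
    HasDerivAt (fun y => -3 * sin (3 * θ y) ^ 2 / h y - 3 * deriv θ y * sin (3 * θ y) / g y)
      (-18 * deriv θ x * sin (3 * θ x) * cos (3 * θ x) / h x
        + 3 * g x * sin (3 * θ x) ^ 2 * cos (3 * θ x) / h x ^ 2
        - 3 * deriv (deriv θ) x * sin (3 * θ x) / g x
        - 9 * deriv θ x ^ 2 * cos (3 * θ x) / g x
        + 3 * deriv θ x * sin (3 * θ x) * deriv g x / g x ^ 2) x := by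
  have hsin := (hθ.hasDerivAt.const_mul 3).sin
  refine ((((hsin.fun_pow 2).const_mul (-3)).fun_div hh hh₀).fun_sub
    (((hθ'.hasDerivAt.const_mul 3).fun_mul hsin).fun_div hg.hasDerivAt hg₀)).congr_deriv ?_
  field_simp
  ring

theorem deriv_coflow_iii_flux (hh : ∀ y, HasDerivAt h (g y * cos (3 * θ y)) y)
    (hθ : Differentiable ℝ θ) (hθ' : DifferentiableAt ℝ (deriv θ) x)
    (hg : DifferentiableAt ℝ g x) (hg₀ : g x ≠ 0) :
    deriv (fun y => deriv (fun z => h z ^ 3 * sin (3 * θ z)) y / g y) x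
      = 6 * h x * g x * cos (3 * θ x) ^ 2 * sin (3 * θ x)
        - 9 * h x ^ 2 * deriv θ x * sin (3 * θ x) ^ 2
        + 18 * h x ^ 2 * deriv θ x * cos (3 * θ x) ^ 2
        + 3 * h x ^ 3 * deriv (deriv θ) x * cos (3 * θ x) / g x
        - 9 * h x ^ 3 * deriv θ x ^ 2 * sin (3 * θ x) / g x
        - 3 * h x ^ 3 * deriv θ x * cos (3 * θ x) * deriv g x / g x ^ 2 := by
  have hflux : ∀ y, deriv (fun z => h z ^ 3 * sin (3 * θ z)) y
      = 3 * h y ^ 2 * g y * cos (3 * θ y) * sin (3 * θ y)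
          + 3 * h y ^ 3 * deriv θ y * cos (3 * θ y) := by
    intro y
    rw [((hh y).fun_pow 3).fun_mul ((hθ y).hasDerivAt.const_mul 3).sin |>.deriv]
    ring
  have hsin := ((hθ x).hasDerivAt.const_mul 3).sin
  have hcos := ((hθ x).hasDerivAt.const_mul 3).cos
  simp only [hflux]
  rw [((((((hh x).fun_pow 2).const_mul 3).fun_mul hg.hasDerivAt).fun_mul hcos).fun_mul hsin
    |>.fun_add ((((hh x).fun_pow 3).const_mul 3).fun_mul hθ'.hasDerivAt |>.fun_mul hcos)
    |>.fun_div hg.hasDerivAt hg₀).deriv]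
  field_simp
  ring

end RadialCalculus

theorem coflow_solve_linear_system {G h s c Gt θt θ₁ θ₂ G₁ : ℝ} (hG : G ≠ 0) (hh : h ≠ 0)
    (hsc : s ^ 2 + c ^ 2 = 1)
    (hA : Gt * c - 3 * G * s * θt
      = -18 * θ₁ * s * c / h + 3 * G * s ^ 2 * c / h ^ 2 - 3 * θ₂ * s / G
        - 9 * θ₁ ^ 2 * c / G + 3 * θ₁ * s * G₁ / G ^ 2)
    (hB : Gt * s + 3 * G * c * θt
      = -3 * G * s * (1 + c ^ 2) / h ^ 2 + 18 * θ₁ * c ^ 2 / h + 3 * θ₂ * c / G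
        - 9 * θ₁ ^ 2 * s / G - 3 * θ₁ * c * G₁ / G ^ 2) :
    Gt = -3 * G * s ^ 2 / h ^ 2 - 9 * θ₁ ^ 2 / G ∧
      θt = θ₂ / G ^ 2 + 6 * θ₁ * c / (h * G) - θ₁ * G₁ / G ^ 3 - 2 * s * c / h ^ 2 := by
  constructor
  · linear_combination (norm := skip) c * hA + s * hB - (Gt + 9 * θ₁ ^ 2 / G) * hsc
    field_simp
    ring
  · linear_combination (norm := skip) (c * hB - s * hA) / (3 * G)
      + (-θt - s * c / h ^ 2 + 6 * θ₁ * c / (h * G) + θ₂ / G ^ 2 - θ₁ * G₁ / G ^ 3) * hsc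
    field_simp
    ring

section CoflowEquations

variable {G h θ : ℝ → ℝ → ℝ} {r t : ℝ}

theorem coflow_mixed_partials (hh : ContDiffAt ℝ 2 (fun p : ℝ × ℝ => h p.1 p.2) (r, t))
    (hi : (fun s => deriv (fun ρ => h ρ s) r) =ᶠ[𝓝 t] fun s => G r s * cos (3 * θ r s))
    (hGt : DifferentiableAt ℝ (fun s => G r s) t) (hθt : DifferentiableAt ℝ (fun s => θ r s) t)
    (hht_eq : ∀ ρ, deriv (fun s => h ρ s) t = -3 * sin (3 * θ ρ t) ^ 2 / h ρ t
      - 3 * deriv (fun ρ => θ ρ t) ρ * sin (3 * θ ρ t) / G ρ t)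
    (hhr : HasDerivAt (fun ρ => h ρ t) (G r t * cos (3 * θ r t)) r)
    (hθr : ContDiff ℝ 2 (fun ρ => θ ρ t))
    (hGr : DifferentiableAt ℝ (fun ρ => G ρ t) r) (hG₀ : G r t ≠ 0) (hh₀ : h r t ≠ 0) :
    deriv (fun s => G r s) t * cos (3 * θ r t)
        - 3 * G r t * sin (3 * θ r t) * deriv (fun s => θ r s) t
      = -18 * deriv (fun ρ => θ ρ t) r * sin (3 * θ r t) * cos (3 * θ r t) / h r t
        + 3 * G r t * sin (3 * θ r t) ^ 2 * cos (3 * θ r t) / h r t ^ 2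
        - 3 * deriv (deriv fun ρ => θ ρ t) r * sin (3 * θ r t) / G r t
        - 9 * deriv (fun ρ => θ ρ t) r ^ 2 * cos (3 * θ r t) / G r t
        + 3 * deriv (fun ρ => θ ρ t) r * sin (3 * θ r t) * deriv (fun ρ => G ρ t) r
          / G r t ^ 2 := by
  have hsym := deriv_deriv_comm_of_contDiffAt hh
  simp only [hht_eq] at hsym
  rw [hi.deriv_eq, (hGt.hasDerivAt.fun_mul (hθt.hasDerivAt.const_mul 3).cos).deriv,
    (hasDerivAt_coflow_ht hhr (hθr.differentiable two_ne_zero r)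
      (hθr.differentiable_deriv_two r) hGr hG₀ hh₀).deriv] at hsym
  linear_combination hsym

theorem coflow_iii_reduced
    (hiii : deriv (fun s => G r s * h r s ^ 3 * sin (3 * θ r s)) t
      = deriv (fun ρ => deriv (fun σ => h σ t ^ 3 * sin (3 * θ σ t)) ρ / G ρ t) r
        - 12 * G r t * h r t * sin (3 * θ r t))
    (hGt : DifferentiableAt ℝ (fun s => G r s) t) (hht : DifferentiableAt ℝ (fun s => h r s) t)
    (hθt : DifferentiableAt ℝ (fun s => θ r s) t)
    (hht_eq : deriv (fun s => h r s) t = -3 * sin (3 * θ r t) ^ 2 / h r t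
      - 3 * deriv (fun ρ => θ ρ t) r * sin (3 * θ r t) / G r t)
    (hhr : ∀ ρ, HasDerivAt (fun ρ => h ρ t) (G ρ t * cos (3 * θ ρ t)) ρ)
    (hθr : ContDiff ℝ 2 (fun ρ => θ ρ t))
    (hGr : DifferentiableAt ℝ (fun ρ => G ρ t) r) (hG₀ : G r t ≠ 0) (hh₀ : h r t ≠ 0) :
    deriv (fun s => G r s) t * sin (3 * θ r t)
        + 3 * G r t * cos (3 * θ r t) * deriv (fun s => θ r s) t
      = -3 * G r t * sin (3 * θ r t) * (1 + cos (3 * θ r t) ^ 2) / h r t ^ 2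
        + 18 * deriv (fun ρ => θ ρ t) r * cos (3 * θ r t) ^ 2 / h r t
        + 3 * deriv (deriv fun ρ => θ ρ t) r * cos (3 * θ r t) / G r t
        - 9 * deriv (fun ρ => θ ρ t) r ^ 2 * sin (3 * θ r t) / G r t
        - 3 * deriv (fun ρ => θ ρ t) r * cos (3 * θ r t) * deriv (fun ρ => G ρ t) r
          / G r t ^ 2 := by
  rw [((hGt.hasDerivAt.fun_mul (hht.hasDerivAt.fun_pow 3)).fun_mul
      (hθt.hasDerivAt.const_mul 3).sin).deriv,
    deriv_coflow_iii_flux hhr (hθr.differentiable two_ne_zero)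
      (hθr.differentiable_deriv_two r) hGr hG₀, hht_eq] at hiii
  linear_combination (norm := skip) (1 / h r t ^ 3) * hiii
    + 9 * G r t * sin (3 * θ r t) / h r t ^ 2 * sin_sq_add_cos_sq (3 * θ r t)
  field_simp
  ring

end CoflowEquations

theorem nk_coflow_evolution_equations_general
    (a b : ℝ) (G h θ : ℝ → ℝ → ℝ)
    (J : Set ℝ) (hJ : J = Set.Ioo a b)
    (hGsmooth : ContDiffOn ℝ 2 (fun p : ℝ × ℝ => G p.1 p.2) (Set.univ ×ˢ J))
    (hhsmooth : ContDiffOn ℝ 2 (fun p : ℝ × ℝ => h p.1 p.2) (Set.univ ×ˢ J))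
    (hθsmooth : ContDiffOn ℝ 2 (fun p : ℝ × ℝ => θ p.1 p.2) (Set.univ ×ˢ J))
    (hGpos : ∀ r : ℝ, ∀ t ∈ J, 0 < G r t)
    (hhpos : ∀ r : ℝ, ∀ t ∈ J, 0 < h r t)
    -- (i) the coclosed condition τ₁ = 0:
    (hi : ∀ r : ℝ, ∀ t ∈ J,
      deriv (fun ρ : ℝ => h ρ t) r = G r t * Real.cos (3 * θ r t))
    -- (ii) the ω²/2-component of the coflow equation:
    (hii : ∀ r : ℝ, ∀ t ∈ J,
      deriv (fun s : ℝ => h r s) t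
        = (1 / (G r t * (h r t) ^ 3))
            * deriv (fun ρ : ℝ => (h ρ t) ^ 3 * Real.cos (3 * θ ρ t)) r
          - 3 / h r t)
    -- (iii) the imaginary part of the dr∧Ω-component of the coflow equation:
    (hiii : ∀ r : ℝ, ∀ t ∈ J,
      deriv (fun s : ℝ => G r s * (h r s) ^ 3 * Real.sin (3 * θ r s)) t
        = deriv (fun ρ : ℝ =>
            deriv (fun σ : ℝ => (h σ t) ^ 3 * Real.sin (3 * θ σ t)) ρ / G ρ t) r
          - 12 * G r t * h r t * Real.sin (3 * θ r t)) :
    ∀ r : ℝ, ∀ t ∈ J,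
      deriv (fun s : ℝ => G r s) t
        = -3 * G r t * (Real.sin (3 * θ r t)) ^ 2 / (h r t) ^ 2
          - 9 * (deriv (fun ρ : ℝ => θ ρ t) r) ^ 2 / G r t ∧
      deriv (fun s : ℝ => θ r s) t
        = deriv (deriv (fun ρ : ℝ => θ ρ t)) r / (G r t) ^ 2
          + 6 * deriv (fun ρ : ℝ => θ ρ t) r * Real.cos (3 * θ r t) / (h r t * G r t)
          - deriv (fun ρ : ℝ => θ ρ t) r * deriv (fun ρ : ℝ => G ρ t) r / (G r t) ^ 3
          - 2 * Real.sin (3 * θ r t) * Real.cos (3 * θ r t) / (h r t) ^ 2 := by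
  intro r t ht
  have hJo : IsOpen J := hJ ▸ isOpen_Ioo
  have hsmooth {F : ℝ → ℝ → ℝ} (hF : ContDiffOn ℝ 2 (fun p : ℝ × ℝ => F p.1 p.2) (univ ×ˢ J)) :
      ContDiffAt ℝ 2 (fun p : ℝ × ℝ => F p.1 p.2) (r, t) :=
    hF.contDiffAt ((isOpen_univ.prod hJo).mem_nhds ⟨trivial, ht⟩)
  have hG₀ ρ : G ρ t ≠ 0 := (hGpos ρ t ht).ne'
  have hh₀ ρ : h ρ t ≠ 0 := (hhpos ρ t ht).ne'
  have hGr := (hGsmooth.contDiff_fst_slice ht).differentiable two_ne_zero r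
  have hθr := hθsmooth.contDiff_fst_slice ht
  have hhr ρ : HasDerivAt (fun ρ => h ρ t) (G ρ t * cos (3 * θ ρ t)) ρ :=
    hi ρ t ht ▸ ((hhsmooth.contDiff_fst_slice ht).differentiable two_ne_zero ρ).hasDerivAt
  have hht_eq ρ : deriv (fun s => h ρ s) t = -3 * sin (3 * θ ρ t) ^ 2 / h ρ t
      - 3 * deriv (fun ρ => θ ρ t) ρ * sin (3 * θ ρ t) / G ρ t := by
    rw [hii ρ t ht]
    exact coflow_ii_rhs_eq (g := fun ρ => G ρ t) (h := fun ρ => h ρ t) (hhr ρ)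
      (hθr.differentiable two_ne_zero ρ) (hG₀ ρ) (hh₀ ρ)
  have hi_near : (fun s => deriv (fun ρ => h ρ s) r) =ᶠ[𝓝 t] fun s => G r s * cos (3 * θ r s) := by
    filter_upwards [hJo.mem_nhds ht] with s hs using hi r s hs
  have hGt := (hsmooth hGsmooth).differentiableAt_snd_slice two_ne_zero
  have hθt := (hsmooth hθsmooth).differentiableAt_snd_slice two_ne_zero
  have hht := (hsmooth hhsmooth).differentiableAt_snd_slice two_ne_zero
  exact coflow_solve_linear_system (hG₀ r) (hh₀ r) (sin_sq_add_cos_sq _)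
    (coflow_mixed_partials (hsmooth hhsmooth) hi_near hGt hθt hht_eq (hhr r) hθr hGr (hG₀ r) (hh₀ r))
    (coflow_iii_reduced (hiii r t ht) hGt hht hθt (hht_eq r) hhr hθr hGr (hG₀ r) (hh₀ r))

/-- Reduction of the Laplacian coflow of a coclosed G₂-structure over a nearly
Kähler 6-manifold to scalar PDEs for the warping functions `h`, `θ` and
the metric coefficient `G`: the coclosed condition (i) `∂ᵣh = G cos 3θ`,
the `ω²/2`-component equation (ii), and the imaginary part (iii) of the
`dr∧Ω`-component equation imply the stated evolution equations for `G` and `θ`. -/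
theorem nk_coflow_evolution_equations
    (a b : ℝ) (G h θ : ℝ → ℝ → ℝ)
    (J : Set ℝ) (hJ : J = Set.Ioo a b)
    (hGsmooth : ContDiffOn ℝ 2 (fun p : ℝ × ℝ => G p.1 p.2) (Set.univ ×ˢ J))
    (hhsmooth : ContDiffOn ℝ 2 (fun p : ℝ × ℝ => h p.1 p.2) (Set.univ ×ˢ J))
    (hθsmooth : ContDiffOn ℝ 2 (fun p : ℝ × ℝ => θ p.1 p.2) (Set.univ ×ˢ J))
    (hGr : ∀ t ∈ J, ContDiff ℝ 3 (fun r : ℝ => G r t))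
    (hhr : ∀ t ∈ J, ContDiff ℝ 3 (fun r : ℝ => h r t))
    (hθr : ∀ t ∈ J, ContDiff ℝ 3 (fun r : ℝ => θ r t))
    (hGpos : ∀ r : ℝ, ∀ t ∈ J, 0 < G r t)
    (hhpos : ∀ r : ℝ, ∀ t ∈ J, 0 < h r t)
    -- (i) the coclosed condition τ₁ = 0:
    (hi : ∀ r : ℝ, ∀ t ∈ J,
      deriv (fun ρ : ℝ => h ρ t) r = G r t * Real.cos (3 * θ r t))
    -- (ii) the ω²/2-component of the coflow equation:
    (hii : ∀ r : ℝ, ∀ t ∈ J,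
      deriv (fun s : ℝ => h r s) t
        = (1 / (G r t * (h r t) ^ 3))
            * deriv (fun ρ : ℝ => (h ρ t) ^ 3 * Real.cos (3 * θ ρ t)) r
          - 3 / h r t)
    -- (iii) the imaginary part of the dr∧Ω-component of the coflow equation:
    (hiii : ∀ r : ℝ, ∀ t ∈ J,
      deriv (fun s : ℝ => G r s * (h r s) ^ 3 * Real.sin (3 * θ r s)) t
        = deriv (fun ρ : ℝ =>
            deriv (fun σ : ℝ => (h σ t) ^ 3 * Real.sin (3 * θ σ t)) ρ / G ρ t) r
          - 12 * G r t * h r t * Real.sin (3 * θ r t)) :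
    ∀ r : ℝ, ∀ t ∈ J,
      deriv (fun s : ℝ => G r s) t
        = -3 * G r t * (Real.sin (3 * θ r t)) ^ 2 / (h r t) ^ 2
          - 9 * (deriv (fun ρ : ℝ => θ ρ t) r) ^ 2 / G r t ∧
      deriv (fun s : ℝ => θ r s) t
        = deriv (deriv (fun ρ : ℝ => θ ρ t)) r / (G r t) ^ 2
          + 6 * deriv (fun ρ : ℝ => θ ρ t) r * Real.cos (3 * θ r t) / (h r t * G r t)
          - deriv (fun ρ : ℝ => θ ρ t) r * deriv (fun ρ : ℝ => G ρ t) r / (G r t) ^ 3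
          - 2 * Real.sin (3 * θ r t) * Real.cos (3 * θ r t) / (h r t) ^ 2 :=
  nk_coflow_evolution_equations_general a b G h θ J hJ hGsmooth hhsmooth hθsmooth hGpos hhpos hi hii
    hiii
end

section
/- Fix λ, b ∈ ℝ and let I = {r ∈ ℝ : r + b > 0}. Define h(r) = r + b, θ(r) = 0, and let k be an antiderivative of s(r) = −(λ/4)(r + b) on I. Then h > 0 on I and the triple (h, θ, k) satisfies on I: (E1) h' = cos(3θ); (E2) (h³ sin 3θ)'' − 12 h sin 3θ − λ h³ sin 3θ − (k' h³ sin 3θ)' = 0; (E3) (h³ cos 3θ)' − 3h² − (λ/4) h⁴ − k' h³ cos 3θ = 0. -/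
open Real

theorem soliton_e2_of_forall_sin_three_mul_eq_zero (lam : ℝ) (h θ k : ℝ → ℝ)
    (hsin : ∀ x, sin (3 * θ x) = 0) (r : ℝ) :
    deriv (deriv (fun x => (h x) ^ 3 * sin (3 * θ x))) r
        - 12 * h r * sin (3 * θ r) - lam * (h r) ^ 3 * sin (3 * θ r)
        - deriv (fun x => deriv k x * (h x) ^ 3 * sin (3 * θ x)) r = 0 := by
  simp [hsin]

/-- With `cos 3θ ≡ 1` and `h' = 1`, the terms `(h³)' = 3h²` cancel and (E3) reduces to
`k' = -(λ/4) h`. -/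
theorem soliton_e3_of_forall_cos_three_mul_eq_one (lam : ℝ) {h θ k : ℝ → ℝ} {r : ℝ}
    (hcos : ∀ x, cos (3 * θ x) = 1) (hh : HasDerivAt h 1 r)
    (hk : HasDerivAt k (-(lam / 4) * h r) r) :
    deriv (fun x => (h x) ^ 3 * cos (3 * θ x)) r
        - 3 * (h r) ^ 2 - (lam / 4) * (h r) ^ 4
        - deriv k r * (h r) ^ 3 * cos (3 * θ r) = 0 := by
  have hcube : HasDerivAt (fun x => h x ^ 3 * cos (3 * θ x)) (3 * h r ^ 2) r := by
    simpa [hcos] using hh.fun_pow 3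
  rw [hcube.deriv, hk.deriv, hcos r]
  ring

/-- The family of nearly Kähler soliton solutions with `3θ = 0`:
`h(r) = r + b`, `θ = 0`, `k' = -(λ/4)(r + b)`, on the interval where
`r + b > 0`, satisfies (E1), (E2), (E3). -/
theorem nk_soliton_cone_family
    (lam b : ℝ) (h θ k : ℝ → ℝ)
    (I : Set ℝ) (hI : I = {r : ℝ | 0 < r + b})
    (hh : ∀ r : ℝ, h r = r + b)
    (hθ : ∀ r : ℝ, θ r = 0)
    (hk : ∀ r ∈ I, HasDerivAt k (-(lam / 4) * (r + b)) r) :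
    (∀ r ∈ I, 0 < h r) ∧
    (∀ r ∈ I, deriv h r = Real.cos (3 * θ r)) ∧
    (∀ r ∈ I,
      deriv (deriv (fun x => (h x) ^ 3 * Real.sin (3 * θ x))) r
        - 12 * h r * Real.sin (3 * θ r) - lam * (h r) ^ 3 * Real.sin (3 * θ r)
        - deriv (fun x => deriv k x * (h x) ^ 3 * Real.sin (3 * θ x)) r = 0) ∧
    (∀ r ∈ I,
      deriv (fun x => (h x) ^ 3 * Real.cos (3 * θ x)) r
        - 3 * (h r) ^ 2 - (lam / 4) * (h r) ^ 4
        - deriv k r * (h r) ^ 3 * Real.cos (3 * θ r) = 0) := by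
  subst hI
  have hsin : ∀ x, sin (3 * θ x) = 0 := by simp [hθ]
  have hcos : ∀ x, cos (3 * θ x) = 1 := by simp [hθ]
  have hlin : ∀ r, HasDerivAt h 1 r := fun r => by
    simpa [funext hh] using (hasDerivAt_id r).add_const b
  refine ⟨fun r hr => (hh r).symm ▸ hr, fun r _ => by rw [(hlin r).deriv, hcos],
    fun r _ => soliton_e2_of_forall_sin_three_mul_eq_zero lam h θ k hsin r,
    fun r hr => soliton_e3_of_forall_cos_three_mul_eq_one lam hcos (hlin r) (hh r ▸ hk r hr)⟩
end

section
/- Fix λ, b ∈ ℝ and let I = {r ∈ ℝ : b − r > 0}. Define h(r) = b − r, θ(r) = π/3, and let k be an antiderivative of s(r) = (λ/4)(b − r) on I. Then h > 0 on I and the triple (h, θ, k) satisfies on I: (E1) h' = cos(3θ); (E2) (h³ sin 3θ)'' − 12 h sin 3θ − λ h³ sin 3θ − (k' h³ sin 3θ)' = 0; (E3) (h³ cos 3θ)' − 3h² − (λ/4) h⁴ − k' h³ cos 3θ = 0. -/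
open Real

/-! With `3θ = π` we have `sin 3θ = 0`, so (E2) holds for any `h` and `k`, and `cos 3θ = -1`,
so (E3) reads `(h³)' + 3h² + (λ/4)h⁴ - k'h³ = 0`; for `h' = -1` this is `k' = (λ/4) h`. -/

lemma soliton_eq2_of_sin_eq_zero (lam : ℝ) {h θ k : ℝ → ℝ} (hs : ∀ x, sin (3 * θ x) = 0)
    (r : ℝ) :
    deriv (deriv (fun x => (h x) ^ 3 * sin (3 * θ x))) r
        - 12 * h r * sin (3 * θ r) - lam * (h r) ^ 3 * sin (3 * θ r)
        - deriv (fun x => deriv k x * (h x) ^ 3 * sin (3 * θ x)) r = 0 := by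
  simp [hs]

lemma soliton_eq3_of_cos_eq_neg_one (lam : ℝ) {h θ k : ℝ → ℝ} (hc : ∀ x, cos (3 * θ x) = -1)
    {r : ℝ} (hh : HasDerivAt h (-1) r) (hk : HasDerivAt k (lam / 4 * h r) r) :
    deriv (fun x => (h x) ^ 3 * cos (3 * θ x)) r
        - 3 * (h r) ^ 2 - (lam / 4) * (h r) ^ 4
        - deriv k r * (h r) ^ 3 * cos (3 * θ r) = 0 := by
  have hcube : HasDerivAt (fun x => (h x) ^ 3 * cos (3 * θ x)) (3 * h r ^ 2) r := by
    simp only [hc, mul_neg_one]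
    exact (hh.fun_pow 3).fun_neg.congr_deriv (by norm_num)
  rw [hcube.deriv, hk.deriv, hc]
  ring

/-- The family of nearly Kähler soliton solutions with `3θ = π`:
`h(r) = b - r`, `θ = π/3`, `k' = (λ/4)(b - r)`, on the interval where
`b - r > 0`, satisfies (E1), (E2), (E3). -/
theorem nk_soliton_reverse_cone_family
    (lam b : ℝ) (h θ k : ℝ → ℝ)
    (I : Set ℝ) (hI : I = {r : ℝ | 0 < b - r})
    (hh : ∀ r : ℝ, h r = b - r)
    (hθ : ∀ r : ℝ, θ r = Real.pi / 3)
    (hk : ∀ r ∈ I, HasDerivAt k ((lam / 4) * (b - r)) r) :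
    (∀ r ∈ I, 0 < h r) ∧
    (∀ r ∈ I, deriv h r = Real.cos (3 * θ r)) ∧
    (∀ r ∈ I,
      deriv (deriv (fun x => (h x) ^ 3 * Real.sin (3 * θ x))) r
        - 12 * h r * Real.sin (3 * θ r) - lam * (h r) ^ 3 * Real.sin (3 * θ r)
        - deriv (fun x => deriv k x * (h x) ^ 3 * Real.sin (3 * θ x)) r = 0) ∧
    (∀ r ∈ I,
      deriv (fun x => (h x) ^ 3 * Real.cos (3 * θ x)) r
        - 3 * (h r) ^ 2 - (lam / 4) * (h r) ^ 4
        - deriv k r * (h r) ^ 3 * Real.cos (3 * θ r) = 0) := by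
  have h3θ : ∀ x, 3 * θ x = π := fun x => by rw [hθ]; ring
  have hh' : ∀ r, HasDerivAt h (-1) r := fun r => by
    rw [funext hh]
    simpa using (hasDerivAt_id r).const_sub b
  subst hI
  refine ⟨fun r hr => (hh r).symm ▸ hr, fun r _ => by rw [(hh' r).deriv, h3θ, cos_pi],
    fun r _ => soliton_eq2_of_sin_eq_zero lam (by simp [h3θ]) r,
    fun r hr => soliton_eq3_of_cos_eq_neg_one lam (by simp [h3θ]) (hh' r) ?_⟩
  rw [hh]
  exact hk r hr
end

section
/- Fix b > 0 and c ∈ ℝ, and set λ = −12/b². Define h(r) = b, θ(r) = π/6, and k(r) = c·r on ℝ. Then the triple (h, θ, k) satisfies on ℝ: (E1) h' = cos(3θ); (E2) (h³ sin 3θ)'' − 12 h sin 3θ − λ h³ sin 3θ − (k' h³ sin 3θ)' = 0; (E3) (h³ cos 3θ)' − 3h² − (λ/4) h⁴ − k' h³ cos 3θ = 0. -/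
open Real

/-- The family of shrinking nearly Kähler solitons with `3θ = π/2`:
`h = b > 0`, `θ = π/6`, `k(r) = c r`, `λ = -12/b²`, satisfies
(E1), (E2), (E3) on all of `ℝ`. -/
theorem nk_soliton_product_family
    (b c lam : ℝ) (hb : 0 < b) (hlam : lam = -12 / b ^ 2)
    (h θ k : ℝ → ℝ)
    (hh : ∀ r : ℝ, h r = b)
    (hθ : ∀ r : ℝ, θ r = Real.pi / 6)
    (hk : ∀ r : ℝ, k r = c * r) :
    (∀ r : ℝ, deriv h r = Real.cos (3 * θ r)) ∧
    (∀ r : ℝ,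
      deriv (deriv (fun x => (h x) ^ 3 * Real.sin (3 * θ x))) r
        - 12 * h r * Real.sin (3 * θ r) - lam * (h r) ^ 3 * Real.sin (3 * θ r)
        - deriv (fun x => deriv k x * (h x) ^ 3 * Real.sin (3 * θ x)) r = 0) ∧
    (∀ r : ℝ,
      deriv (fun x => (h x) ^ 3 * Real.cos (3 * θ x)) r
        - 3 * (h r) ^ 2 - (lam / 4) * (h r) ^ 4
        - deriv k r * (h r) ^ 3 * Real.cos (3 * θ r) = 0) := by
  obtain rfl : h = fun _ => b := funext hh
  obtain rfl : θ = fun _ => π / 6 := funext hθ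
  obtain rfl : k = fun x => c * x := funext hk
  have hlam_mul_sq : lam * b ^ 2 = -12 := by
    rw [hlam, div_mul_cancel₀ _ (pow_ne_zero 2 hb.ne')]
  have h3θ : 3 * (π / 6) = π / 2 := by ring
  simp only [h3θ, sin_pi_div_two, cos_pi_div_two, deriv_const', deriv_const_mul_id',
    mul_zero, mul_one]
  -- Since `3θ = π/2` and every profile is constant, (E2) and (E3) are multiples of `12 + λ b² = 0`.
  refine ⟨fun _ => trivial, fun _ => ?_, fun _ => ?_⟩
  · linear_combination (-b) * hlam_mul_sq
  · linear_combination (-b ^ 2 / 4) * hlam_mul_sq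
end

section
/- Set λ = −16 and let I = (0, π). Define h(r) = sin(r), θ(r) = r/3, and k(r) = 0 on I. Then h > 0 on I and the triple (h, θ, k) satisfies on I: (E1) h' = cos(3θ); (E2) (h³ sin 3θ)'' − 12 h sin 3θ − λ h³ sin 3θ − (k' h³ sin 3θ)' = 0; (E3) (h³ cos 3θ)' − 3h² − (λ/4) h⁴ − k' h³ cos 3θ = 0. -/
/-!
With `θ = r/3` the angle `3θ` is just `r`, so `h³ sin 3θ = sin⁴ r` and `h³ cos 3θ = sin³ r cos r`,
and `k' = 0` kills the soliton terms. Differentiating, (E2) and (E3) reduce to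
`12 sin² r (cos² r + sin² r - 1) = 0` and `3 sin² r (cos² r + sin² r - 1) = 0`.
-/

open Real

lemma hasDerivAt_sin_pow_three_mul_cos (x : ℝ) :
    HasDerivAt (fun x => sin x ^ 3 * cos x) (3 * sin x ^ 2 * cos x ^ 2 - sin x ^ 4) x := by
  refine (((hasDerivAt_sin x).fun_pow 3).fun_mul (hasDerivAt_cos x)).congr_deriv ?_
  ring

lemma deriv_sin_pow_four : deriv (fun x => sin x ^ 4) = fun x => 4 * (sin x ^ 3 * cos x) := by
  funext x
  rw [((hasDerivAt_sin x).fun_pow 4).deriv]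
  ring

lemma deriv_deriv_sin_pow_four (x : ℝ) :
    deriv (deriv fun x => sin x ^ 4) x = 4 * (3 * sin x ^ 2 * cos x ^ 2 - sin x ^ 4) := by
  rw [deriv_sin_pow_four]
  exact ((hasDerivAt_sin_pow_three_mul_cos x).const_mul 4).deriv

/-- The sine-cone solution of the nearly Kähler soliton system: `h(r) = sin r`,
`θ(r) = r/3`, `k = 0`, `λ = -16`, on `I = (0, π)`, satisfies (E1), (E2), (E3);
this shrinking soliton is an eigenform of its own Hodge Laplacian. -/
theorem nk_soliton_sine_cone
    (lam : ℝ) (hlam : lam = -16)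
    (h θ k : ℝ → ℝ)
    (I : Set ℝ) (hI : I = Set.Ioo 0 Real.pi)
    (hh : ∀ r : ℝ, h r = Real.sin r)
    (hθ : ∀ r : ℝ, θ r = r / 3)
    (hk : ∀ r : ℝ, k r = 0) :
    (∀ r ∈ I, 0 < h r) ∧
    (∀ r ∈ I, deriv h r = Real.cos (3 * θ r)) ∧
    (∀ r ∈ I,
      deriv (deriv (fun x => (h x) ^ 3 * Real.sin (3 * θ x))) r
        - 12 * h r * Real.sin (3 * θ r) - lam * (h r) ^ 3 * Real.sin (3 * θ r)
        - deriv (fun x => deriv k x * (h x) ^ 3 * Real.sin (3 * θ x)) r = 0) ∧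
    (∀ r ∈ I,
      deriv (fun x => (h x) ^ 3 * Real.cos (3 * θ x)) r
        - 3 * (h r) ^ 2 - (lam / 4) * (h r) ^ 4
        - deriv k r * (h r) ^ 3 * Real.cos (3 * θ r) = 0) := by
  obtain rfl : h = sin := funext hh
  obtain rfl : θ = (· / 3) := funext hθ
  obtain rfl : k = fun _ => 0 := funext hk
  subst hlam hI
  have hangle (x : ℝ) : 3 * (x / 3) = x := by ring
  simp only [hangle, ← pow_succ, deriv_const', zero_mul]
  refine ⟨fun r hr => sin_pos_of_pos_of_lt_pi hr.1 hr.2, fun r _ => congrFun Real.deriv_sin r,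
    fun r _ => ?_, fun r _ => ?_⟩
  · rw [deriv_deriv_sin_pow_four]
    linear_combination 12 * sin r ^ 2 * sin_sq_add_cos_sq r
  · rw [(hasDerivAt_sin_pow_three_mul_cos r).deriv]
    linear_combination 3 * sin r ^ 2 * sin_sq_add_cos_sq r
end

section
/- Let I ⊆ ℝ be an open interval, λ ∈ ℝ, and let h, θ, k : I → ℝ be sufficiently smooth (h three times differentiable, θ twice differentiable, k twice differentiable) with h > 0, h'(r) = cos(3θ(r)) and h'(r) ≠ 0 on I. Set u(r) = sin(3θ(r)). Suppose (E2) (h³ u)'' − 12 h u − λ h³ u − (k' h³ u)' = 0 and (E3) (h³ cos 3θ)' − 3h² − (λ/4) h⁴ − k' h³ cos 3θ = 0 hold on I. Then on I: 0 = u''·h³ + u'·( 3h² h' − h³ h''/h' + 3h²/h' + λ h⁴/(4h') ) + u·( −3h² h'' − 6h − h³ h'''/h' − 3h² h''/(h')² − λ h⁴ h''/(4(h')²) + h³ (h'')²/(h')² ). -/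
/-!
By (E1), `cos 3θ = h'`, so (E3) reads `k' h³ h' = (h³ h')' - 3h² - (λ/4) h⁴ =: P`, a
polynomial in `h, h', h''`. Since `h' ≠ 0`, this gives `k' h³ u = P u / h'`, free of `k`.
Substituting into (E2), expanding both derivatives by the Leibniz and quotient rules and
multiplying by `h'²` gives the stated linear equation in `u`.
-/

open Filter Topology

theorem deriv_deriv_mul_of_hasDerivAt {𝕜 : Type*} [NontriviallyNormedField 𝕜]
    {f g f' g' : 𝕜 → 𝕜} {f'' g'' r : 𝕜}
    (hf : ∀ᶠ x in 𝓝 r, HasDerivAt f (f' x) x) (hg : ∀ᶠ x in 𝓝 r, HasDerivAt g (g' x) x)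
    (hf' : HasDerivAt f' f'' r) (hg' : HasDerivAt g' g'' r) :
    deriv (deriv fun x => f x * g x) r = f'' * g r + 2 * f' r * g' r + f r * g'' := by
  have hfg : deriv (fun x => f x * g x) =ᶠ[𝓝 r] fun x => f' x * g x + f x * g' x := by
    filter_upwards [hf, hg] with x hfx hgx
    exact (hfx.mul hgx).deriv
  rw [hfg.deriv_eq,
    ((hf'.fun_mul hg.self_of_nhds).fun_add (hf.self_of_nhds.fun_mul hg')).deriv]
  ring

section Cube

variable {h u : ℝ → ℝ} {x : ℝ}

theorem hasDerivAt_pow_three (hh : DifferentiableAt ℝ h x) :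
    HasDerivAt (fun y => h y ^ 3) (3 * h x ^ 2 * deriv h x) x := by
  refine (hh.hasDerivAt.fun_pow 3).congr_deriv ?_
  norm_num

theorem deriv_deriv_pow_three_mul (hh : ∀ᶠ y in 𝓝 x, DifferentiableAt ℝ h y)
    (hh' : DifferentiableAt ℝ (deriv h) x) (hu : ∀ᶠ y in 𝓝 x, DifferentiableAt ℝ u y)
    (hu' : DifferentiableAt ℝ (deriv u) x) :
    deriv (deriv fun y => h y ^ 3 * u y) x
      = (6 * h x * deriv h x ^ 2 + 3 * h x ^ 2 * deriv (deriv h) x) * u x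
        + 6 * h x ^ 2 * deriv h x * deriv u x + h x ^ 3 * deriv (deriv u) x := by
  have hcube' : HasDerivAt (fun y => 3 * h y ^ 2 * deriv h y)
      (6 * h x * deriv h x ^ 2 + 3 * h x ^ 2 * deriv (deriv h) x) x := by
    refine (((hh.self_of_nhds.hasDerivAt.fun_pow 2).const_mul 3).fun_mul
      hh'.hasDerivAt).congr_deriv ?_
    push_cast
    ring
  rw [deriv_deriv_mul_of_hasDerivAt (hh.mono fun y => hasDerivAt_pow_three)
    (hu.mono fun y hy => hy.hasDerivAt) hcube' hu'.hasDerivAt]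
  ring

end Cube

section Elimination

variable {lam : ℝ} {h k : ℝ → ℝ} {x : ℝ}

/-- `k' h³ h'` as given by (E3) once `cos 3θ = h'`, i.e. `(h³ h')' - 3h² - (λ/4) h⁴` expanded. -/
noncomputable def kDerivNumerator (lam : ℝ) (h : ℝ → ℝ) (x : ℝ) : ℝ :=
  3 * h x ^ 2 * deriv h x ^ 2 + h x ^ 3 * deriv (deriv h) x - 3 * h x ^ 2 - lam / 4 * h x ^ 4

theorem hasDerivAt_kDerivNumerator (hh : DifferentiableAt ℝ h x)
    (hh' : DifferentiableAt ℝ (deriv h) x) (hh'' : DifferentiableAt ℝ (deriv (deriv h)) x) :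
    HasDerivAt (kDerivNumerator lam h)
      (6 * h x * deriv h x ^ 3 + 9 * h x ^ 2 * deriv h x * deriv (deriv h) x
        + h x ^ 3 * deriv (deriv (deriv h)) x - 6 * h x * deriv h x
        - lam * h x ^ 3 * deriv h x) x := by
  have hh := hh.hasDerivAt
  have hsq := ((hh.fun_pow 2).const_mul 3).fun_mul (hh'.hasDerivAt.fun_pow 2)
  have hcube := (hasDerivAt_pow_three hh.differentiableAt).fun_mul hh''.hasDerivAt
  refine ((hsq.fun_add hcube).fun_sub ((hh.fun_pow 2).const_mul 3)).fun_sub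
    ((hh.fun_pow 4).const_mul (lam / 4)) |>.congr_deriv ?_
  push_cast
  ring

theorem deriv_mul_pow_three_mul_deriv_eq {c : ℝ → ℝ} (hc : ∀ᶠ y in 𝓝 x, deriv h y = c y)
    (hh : DifferentiableAt ℝ h x) (hh' : DifferentiableAt ℝ (deriv h) x)
    (hE3 : deriv (fun y => h y ^ 3 * c y) x - 3 * h x ^ 2 - (lam / 4) * h x ^ 4
        - deriv k x * h x ^ 3 * c x = 0) :
    deriv k x * h x ^ 3 * deriv h x = kDerivNumerator lam h x := by
  have hc' : (fun y => h y ^ 3 * c y) =ᶠ[𝓝 x] fun y => h y ^ 3 * deriv h y := by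
    filter_upwards [hc] with y hy
    rw [hy]
  rw [hc'.deriv_eq, ((hasDerivAt_pow_three hh).fun_mul hh'.hasDerivAt).deriv,
    ← hc.self_of_nhds] at hE3
  unfold kDerivNumerator
  linear_combination -hE3

end Elimination

theorem nk_soliton_second_order_u_equation_general
    (a b lam : ℝ) (h θ k u : ℝ → ℝ)
    (I : Set ℝ) (hI : I = Set.Ioo a b)
    (hh1 : ∀ r ∈ I, DifferentiableAt ℝ h r)
    (hh2 : ∀ r ∈ I, DifferentiableAt ℝ (deriv h) r)
    (hh3 : ∀ r ∈ I, DifferentiableAt ℝ (deriv (deriv h)) r)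
    (hθ1 : ∀ r ∈ I, DifferentiableAt ℝ θ r)
    (hθ2 : ∀ r ∈ I, DifferentiableAt ℝ (deriv θ) r)
    (hE1 : ∀ r ∈ I, deriv h r = Real.cos (3 * θ r))
    (hne : ∀ r ∈ I, deriv h r ≠ 0)
    (hu : ∀ r : ℝ, u r = Real.sin (3 * θ r))
    (hE2 : ∀ r ∈ I,
      deriv (deriv (fun x => (h x) ^ 3 * u x)) r
        - 12 * h r * u r - lam * (h r) ^ 3 * u r
        - deriv (fun x => deriv k x * (h x) ^ 3 * u x) r = 0)
    (hE3 : ∀ r ∈ I,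
      deriv (fun x => (h x) ^ 3 * Real.cos (3 * θ x)) r
        - 3 * (h r) ^ 2 - (lam / 4) * (h r) ^ 4
        - deriv k r * (h r) ^ 3 * Real.cos (3 * θ r) = 0) :
    ∀ r ∈ I,
      0 = deriv (deriv u) r * (h r) ^ 3
        + deriv u r * (3 * (h r) ^ 2 * deriv h r
            - (h r) ^ 3 * deriv (deriv h) r / deriv h r
            + 3 * (h r) ^ 2 / deriv h r
            + lam * (h r) ^ 4 / (4 * deriv h r))
        + u r * (-(3 * (h r) ^ 2 * deriv (deriv h) r) - 6 * h r
            - (h r) ^ 3 * deriv (deriv (deriv h)) r / deriv h r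
            - 3 * (h r) ^ 2 * deriv (deriv h) r / (deriv h r) ^ 2
            - lam * (h r) ^ 4 * deriv (deriv h) r / (4 * (deriv h r) ^ 2)
            + (h r) ^ 3 * (deriv (deriv h) r) ^ 2 / (deriv h r) ^ 2) := by
  have hIopen : IsOpen I := hI ▸ isOpen_Ioo
  have hnhds : ∀ r ∈ I, ∀ᶠ x in 𝓝 r, x ∈ I := fun r hr => hIopen.mem_nhds hr
  have hu' : ∀ x ∈ I, HasDerivAt u (Real.cos (3 * θ x) * (3 * deriv θ x)) x := fun x hx => by
    rw [funext hu]
    exact ((hθ1 x hx).hasDerivAt.const_mul 3).sin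
  intro r hr
  have hu'' : DifferentiableAt ℝ (deriv u) r :=
    ((((hθ1 r hr).const_mul 3).cos).mul ((hθ2 r hr).const_mul 3)).congr_of_eventuallyEq
      ((hnhds r hr).mono fun x hx => (hu' x hx).deriv)
  have hk : (fun x => deriv k x * h x ^ 3 * u x) =ᶠ[𝓝 r]
      fun x => kDerivNumerator lam h x * u x / deriv h x := by
    filter_upwards [hnhds r hr] with x hx
    rw [← deriv_mul_pow_three_mul_deriv_eq ((hnhds x hx).mono hE1) (hh1 x hx) (hh2 x hx)
      (hE3 x hx)]
    field_simp [hne x hx]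
  have hE2r := hE2 r hr
  rw [deriv_deriv_pow_three_mul ((hnhds r hr).mono hh1) (hh2 r hr)
      ((hnhds r hr).mono fun x hx => (hu' x hx).differentiableAt) hu'',
    hk.deriv_eq, (((hasDerivAt_kDerivNumerator (hh1 r hr) (hh2 r hr) (hh3 r hr)).fun_mul
      (hu' r hr).differentiableAt.hasDerivAt).fun_div (hh2 r hr).hasDerivAt (hne r hr)).deriv]
    at hE2r
  unfold kDerivNumerator at hE2r
  field_simp [hne r hr] at hE2r ⊢
  linear_combination -hE2r

/-- The intermediate second-order linear equation in `u = sin 3θ` obtained by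
eliminating `k'` from (E2) of the nearly Kähler soliton system using (E3),
under the coclosed condition (E1) `h' = cos 3θ` and `h' ≠ 0`. -/
theorem nk_soliton_second_order_u_equation
    (a b lam : ℝ) (h θ k u : ℝ → ℝ)
    (I : Set ℝ) (hI : I = Set.Ioo a b)
    (hpos : ∀ r ∈ I, 0 < h r)
    (hh1 : ∀ r ∈ I, DifferentiableAt ℝ h r)
    (hh2 : ∀ r ∈ I, DifferentiableAt ℝ (deriv h) r)
    (hh3 : ∀ r ∈ I, DifferentiableAt ℝ (deriv (deriv h)) r)
    (hθ1 : ∀ r ∈ I, DifferentiableAt ℝ θ r)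
    (hθ2 : ∀ r ∈ I, DifferentiableAt ℝ (deriv θ) r)
    (hk1 : ∀ r ∈ I, DifferentiableAt ℝ k r)
    (hk2 : ∀ r ∈ I, DifferentiableAt ℝ (deriv k) r)
    (hE1 : ∀ r ∈ I, deriv h r = Real.cos (3 * θ r))
    (hne : ∀ r ∈ I, deriv h r ≠ 0)
    (hu : ∀ r : ℝ, u r = Real.sin (3 * θ r))
    (hE2 : ∀ r ∈ I,
      deriv (deriv (fun x => (h x) ^ 3 * u x)) r
        - 12 * h r * u r - lam * (h r) ^ 3 * u r
        - deriv (fun x => deriv k x * (h x) ^ 3 * u x) r = 0)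
    (hE3 : ∀ r ∈ I,
      deriv (fun x => (h x) ^ 3 * Real.cos (3 * θ x)) r
        - 3 * (h r) ^ 2 - (lam / 4) * (h r) ^ 4
        - deriv k r * (h r) ^ 3 * Real.cos (3 * θ r) = 0) :
    ∀ r ∈ I,
      0 = deriv (deriv u) r * (h r) ^ 3
        + deriv u r * (3 * (h r) ^ 2 * deriv h r
            - (h r) ^ 3 * deriv (deriv h) r / deriv h r
            + 3 * (h r) ^ 2 / deriv h r
            + lam * (h r) ^ 4 / (4 * deriv h r))
        + u r * (-(3 * (h r) ^ 2 * deriv (deriv h) r) - 6 * h r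
            - (h r) ^ 3 * deriv (deriv (deriv h)) r / deriv h r
            - 3 * (h r) ^ 2 * deriv (deriv h) r / (deriv h r) ^ 2
            - lam * (h r) ^ 4 * deriv (deriv h) r / (4 * (deriv h r) ^ 2)
            + (h r) ^ 3 * (deriv (deriv h) r) ^ 2 / (deriv h r) ^ 2) :=
  nk_soliton_second_order_u_equation_general a b lam h θ k u I hI hh1 hh2 hh3 hθ1 hθ2 hE1 hne hu hE2
    hE3
end

section
/- Let I ⊆ ℝ be an open interval, λ ∈ ℝ, and let h, θ, k : I → ℝ be sufficiently smooth (h three times differentiable, θ twice differentiable, k twice differentiable) with h > 0 on I, h'(r) = cos(3θ(r)) for all r ∈ I, and h'(r) ≠ 0 on I. Suppose the equations (E2) (h³ sin 3θ)'' − 12 h sin 3θ − λ h³ sin 3θ − (k' h³ sin 3θ)' = 0 and (E3) (h³ cos 3θ)' − 3h² − (λ/4) h⁴ − k' h³ cos 3θ = 0 hold on I. Then h satisfies on I the third-order ODE: h³(h')³h''' − h³ h' h''' − 2h³(h')²(h'')² + 3h²(h')⁴h'' − 6h(h')² + h³(h'')² − 3h² h'' + 12h(h')⁴ − 6h(h')⁶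 + (λ/4)h⁴(h')²h'' − (λ/4)h⁴h'' = 0. -/
/-!
Put `φ = 3θ` and `s = sin φ`, so that `h' = cos φ`, `h'' = -s φ'` and `s² = 1 - h'²`.
Equation (E2) says that `Q = (h³ s)' - k' h³ s` satisfies `Q' = (12 h + λ h³) s`.
Multiplying `Q` by `h' s` and eliminating `k' h³ h'` with (E3) gives
`h' s Q = -h³ h'' + (1 - h'²) (3 h² + λ/4 h⁴)`, in which neither `k` nor `θ` appears.
Differentiating this identity and eliminating `h' s Q`, `s²` and `s φ'` once more
leaves a polynomial relation between `h, h', h'', h'''`: the third-order equation.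
-/

open Real

section SolitonSystem

variable {U : Set ℝ} {h φ κ : ℝ → ℝ} {x lam : ℝ}

theorem hasDerivAt_pow_three_mul_sin (hh : DifferentiableAt ℝ h x)
    (hφ : DifferentiableAt ℝ φ x) :
    HasDerivAt (fun y => h y ^ 3 * sin (φ y))
      (3 * h x ^ 2 * deriv h x * sin (φ x) + h x ^ 3 * (cos (φ x) * deriv φ x)) x :=
  ((hh.hasDerivAt.fun_pow 3).fun_mul hφ.hasDerivAt.sin).congr_deriv (by norm_num)

theorem hasDerivAt_pow_three_mul_cos (hh : DifferentiableAt ℝ h x)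
    (hφ : DifferentiableAt ℝ φ x) :
    HasDerivAt (fun y => h y ^ 3 * cos (φ y))
      (3 * h x ^ 2 * deriv h x * cos (φ x) - h x ^ 3 * (sin (φ x) * deriv φ x)) x :=
  ((hh.hasDerivAt.fun_pow 3).fun_mul hφ.hasDerivAt.cos).congr_deriv (by norm_num; ring)

theorem deriv_deriv_eq_neg_sin_mul (hU : IsOpen U) (hx : x ∈ U)
    (hE1 : ∀ y ∈ U, deriv h y = cos (φ y)) (hφ : DifferentiableAt ℝ φ x) :
    deriv (deriv h) x = -sin (φ x) * deriv φ x := by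
  rw [Set.EqOn.deriv hE1 hU hx]
  exact hφ.hasDerivAt.cos.deriv

/-- With `κ = k'`, equation (E2) says that this has derivative `(12 h + λ h³) sin φ`. -/
noncomputable def solitonFlux (h φ κ : ℝ → ℝ) (x : ℝ) : ℝ :=
  deriv (fun y => h y ^ 3 * sin (φ y)) x - κ x * h x ^ 3 * sin (φ x)

theorem hasDerivAt_solitonFlux (hU : IsOpen U) (hx : x ∈ U)
    (hh : ∀ y ∈ U, DifferentiableAt ℝ h y) (hh' : DifferentiableAt ℝ (deriv h) x)
    (hφ : ∀ y ∈ U, DifferentiableAt ℝ φ y) (hφ' : DifferentiableAt ℝ (deriv φ) x)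
    (hκ : DifferentiableAt ℝ κ x)
    (hE2 : deriv (deriv (fun y => h y ^ 3 * sin (φ y))) x
        - 12 * h x * sin (φ x) - lam * h x ^ 3 * sin (φ x)
        - deriv (fun y => κ y * h y ^ 3 * sin (φ y)) x = 0) :
    HasDerivAt (solitonFlux h φ κ) ((12 * h x + lam * h x ^ 3) * sin (φ x)) x := by
  have hS' : deriv (fun y => h y ^ 3 * sin (φ y)) =ᶠ[nhds x]
      fun y => 3 * h y ^ 2 * deriv h y * sin (φ y) + h y ^ 3 * (cos (φ y) * deriv φ y) :=
    Filter.eventually_of_mem (hU.mem_nhds hx) fun y hy =>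
      (hasDerivAt_pow_three_mul_sin (hh y hy) (hφ y hy)).deriv
  have hhx := hh x hx
  have hφx := hφ x hx
  have hS'_diff : DifferentiableAt ℝ (deriv fun y => h y ^ 3 * sin (φ y)) x :=
    DifferentiableAt.congr_of_eventuallyEq (by fun_prop) hS'
  have hκS : DifferentiableAt ℝ (fun y => κ y * h y ^ 3 * sin (φ y)) x := by fun_prop
  exact (hS'_diff.hasDerivAt.fun_sub hκS.hasDerivAt).congr_deriv (by linarith)

theorem deriv_mul_sin_mul_solitonFlux (hU : IsOpen U) (hx : x ∈ U)
    (hh : DifferentiableAt ℝ h x) (hφ : DifferentiableAt ℝ φ x)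
    (hE1 : ∀ y ∈ U, deriv h y = cos (φ y))
    (hE3 : deriv (fun y => h y ^ 3 * cos (φ y)) x - 3 * h x ^ 2 - lam / 4 * h x ^ 4
        - κ x * h x ^ 3 * cos (φ x) = 0) :
    deriv h x * sin (φ x) * solitonFlux h φ κ x =
      -h x ^ 3 * deriv (deriv h) x + (1 - deriv h x ^ 2) * (3 * h x ^ 2 + lam / 4 * h x ^ 4) := by
  rw [(hasDerivAt_pow_three_mul_cos hh hφ).deriv, hE1 x hx] at hE3
  rw [solitonFlux, (hasDerivAt_pow_three_mul_sin hh hφ).deriv,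
    deriv_deriv_eq_neg_sin_mul hU hx hE1 hφ, hE1 x hx]
  linear_combination sin (φ x) ^ 2 * hE3
    + (h x ^ 3 * sin (φ x) * deriv φ x + 3 * h x ^ 2 + lam / 4 * h x ^ 4)
      * sin_sq_add_cos_sq (φ x)

theorem deriv_deriv_mul_sin_mul_solitonFlux (hU : IsOpen U) (hx : x ∈ U)
    (hh : ∀ y ∈ U, DifferentiableAt ℝ h y) (hh' : DifferentiableAt ℝ (deriv h) x)
    (hh'' : DifferentiableAt ℝ (deriv (deriv h)) x)
    (hφ : ∀ y ∈ U, DifferentiableAt ℝ φ y) (hφ' : DifferentiableAt ℝ (deriv φ) x)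
    (hκ : DifferentiableAt ℝ κ x)
    (hE1 : ∀ y ∈ U, deriv h y = cos (φ y))
    (hE2 : deriv (deriv (fun y => h y ^ 3 * sin (φ y))) x
        - 12 * h x * sin (φ x) - lam * h x ^ 3 * sin (φ x)
        - deriv (fun y => κ y * h y ^ 3 * sin (φ y)) x = 0)
    (hE3 : ∀ y ∈ U, deriv (fun y => h y ^ 3 * cos (φ y)) y - 3 * h y ^ 2 - lam / 4 * h y ^ 4
        - κ y * h y ^ 3 * cos (φ y) = 0) :
    (deriv (deriv h) x * sin (φ x) + deriv h x ^ 2 * deriv φ x) * solitonFlux h φ κ x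
        + deriv h x * sin (φ x) * ((12 * h x + lam * h x ^ 3) * sin (φ x)) =
      -(3 * h x ^ 2 * deriv h x * deriv (deriv h) x + h x ^ 3 * deriv (deriv (deriv h)) x)
        - 2 * deriv h x * deriv (deriv h) x * (3 * h x ^ 2 + lam / 4 * h x ^ 4)
        + (1 - deriv h x ^ 2) * (6 * h x * deriv h x + lam * h x ^ 3 * deriv h x) := by
  have hQ := hasDerivAt_solitonFlux hU hx hh hh' hφ hφ' hκ hE2
  have hL := (hh'.hasDerivAt.fun_mul (hφ x hx).hasDerivAt.sin).fun_mul hQ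
  have hR : HasDerivAt
      (fun y => -h y ^ 3 * deriv (deriv h) y
        + (1 - deriv h y ^ 2) * (3 * h y ^ 2 + lam / 4 * h y ^ 4))
      (-(3 * h x ^ 2 * deriv h x * deriv (deriv h) x + h x ^ 3 * deriv (deriv (deriv h)) x)
        - 2 * deriv h x * deriv (deriv h) x * (3 * h x ^ 2 + lam / 4 * h x ^ 4)
        + (1 - deriv h x ^ 2) * (6 * h x * deriv h x + lam * h x ^ 3 * deriv h x)) x := by
    have hhx := (hh x hx).hasDerivAt
    exact (((hhx.fun_pow 3).neg.fun_mul hh''.hasDerivAt).fun_add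
      (((hasDerivAt_const x 1).fun_sub (hh'.hasDerivAt.fun_pow 2)).fun_mul
        (((hhx.fun_pow 2).const_mul 3).fun_add ((hhx.fun_pow 4).const_mul (lam / 4))))).congr_deriv
      (by norm_num; ring)
  have hLR : (fun y => deriv h y * sin (φ y) * solitonFlux h φ κ y) =ᶠ[nhds x]
      fun y => -h y ^ 3 * deriv (deriv h) y
        + (1 - deriv h y ^ 2) * (3 * h y ^ 2 + lam / 4 * h y ^ 4) :=
    Filter.eventually_of_mem (hU.mem_nhds hx) fun y hy =>
      deriv_mul_sin_mul_solitonFlux hU hy (hh y hy) (hφ y hy) hE1 (hE3 y hy)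
  linear_combination hL.unique (hR.congr_of_eventuallyEq hLR)
    + deriv h x * deriv φ x * solitonFlux h φ κ x * hE1 x hx

end SolitonSystem

theorem third_order_ode_of_flux_relations {H H₁ H₂ H₃ s t Q lam : ℝ}
    (hs : s ^ 2 + H₁ ^ 2 = 1) (hH₂ : H₂ = -s * t)
    (hA : H₁ * s * Q = -H ^ 3 * H₂ + (1 - H₁ ^ 2) * (3 * H ^ 2 + lam / 4 * H ^ 4))
    (hA' : (H₂ * s + H₁ ^ 2 * t) * Q + H₁ * s * ((12 * H + lam * H ^ 3) * s) =
      -(3 * H ^ 2 * H₁ * H₂ + H ^ 3 * H₃) - 2 * H₁ * H₂ * (3 * H ^ 2 + lam / 4 * H ^ 4)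
        + (1 - H₁ ^ 2) * (6 * H * H₁ + lam * H ^ 3 * H₁)) :
    H ^ 3 * H₁ ^ 3 * H₃
        - H ^ 3 * H₁ * H₃
        - 2 * H ^ 3 * H₁ ^ 2 * H₂ ^ 2
        + 3 * H ^ 2 * H₁ ^ 4 * H₂
        - 6 * H * H₁ ^ 2
        + H ^ 3 * H₂ ^ 2
        - 3 * H ^ 2 * H₂
        + 12 * H * H₁ ^ 4
        - 6 * H * H₁ ^ 6
        + (lam / 4) * H ^ 4 * H₁ ^ 2 * H₂
        - (lam / 4) * H ^ 4 * H₂ = 0 := by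
  -- The goal is `H₁ (1 - H₁²) R' - H₂ (1 - 2 H₁²) R - (12 H + λ H³) H₁² (1 - H₁²)²`
  -- as a polynomial, where `R`, `R'` are the right-hand sides of `hA`, `hA'`.
  linear_combination -(1 - H₁ ^ 2) * H₁ * hA' + (1 - 2 * H₁ ^ 2) * H₂ * hA
    + H₁ ^ 3 * s * Q * hH₂
    + ((12 * H + lam * H ^ 3) * H₁ ^ 2 * (1 - H₁ ^ 2) - H₁ ^ 3 * t * Q) * hs

theorem nk_soliton_third_order_ode_general
    (a b lam : ℝ) (h θ k : ℝ → ℝ)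
    (I : Set ℝ) (hI : I = Set.Ioo a b)
    (hh1 : ∀ r ∈ I, DifferentiableAt ℝ h r)
    (hh2 : ∀ r ∈ I, DifferentiableAt ℝ (deriv h) r)
    (hh3 : ∀ r ∈ I, DifferentiableAt ℝ (deriv (deriv h)) r)
    (hθ1 : ∀ r ∈ I, DifferentiableAt ℝ θ r)
    (hθ2 : ∀ r ∈ I, DifferentiableAt ℝ (deriv θ) r)
    (hk2 : ∀ r ∈ I, DifferentiableAt ℝ (deriv k) r)
    (hE1 : ∀ r ∈ I, deriv h r = Real.cos (3 * θ r))
    (hE2 : ∀ r ∈ I,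
      deriv (deriv (fun x => (h x) ^ 3 * Real.sin (3 * θ x))) r
        - 12 * h r * Real.sin (3 * θ r) - lam * (h r) ^ 3 * Real.sin (3 * θ r)
        - deriv (fun x => deriv k x * (h x) ^ 3 * Real.sin (3 * θ x)) r = 0)
    (hE3 : ∀ r ∈ I,
      deriv (fun x => (h x) ^ 3 * Real.cos (3 * θ x)) r
        - 3 * (h r) ^ 2 - (lam / 4) * (h r) ^ 4
        - deriv k r * (h r) ^ 3 * Real.cos (3 * θ r) = 0) :
    ∀ r ∈ I,
      (h r) ^ 3 * (deriv h r) ^ 3 * deriv (deriv (deriv h)) r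
        - (h r) ^ 3 * deriv h r * deriv (deriv (deriv h)) r
        - 2 * (h r) ^ 3 * (deriv h r) ^ 2 * (deriv (deriv h) r) ^ 2
        + 3 * (h r) ^ 2 * (deriv h r) ^ 4 * deriv (deriv h) r
        - 6 * h r * (deriv h r) ^ 2
        + (h r) ^ 3 * (deriv (deriv h) r) ^ 2
        - 3 * (h r) ^ 2 * deriv (deriv h) r
        + 12 * h r * (deriv h r) ^ 4
        - 6 * h r * (deriv h r) ^ 6
        + (lam / 4) * (h r) ^ 4 * (deriv h r) ^ 2 * deriv (deriv h) r
        - (lam / 4) * (h r) ^ 4 * deriv (deriv h) r = 0 := by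
  intro r hr
  have hU : IsOpen I := hI ▸ isOpen_Ioo
  have hφ : ∀ x ∈ I, DifferentiableAt ℝ (fun y => 3 * θ y) x :=
    fun x hx => (hθ1 x hx).const_mul 3
  have hφ' : DifferentiableAt ℝ (deriv fun y => 3 * θ y) r := by
    rw [deriv_const_mul_field']
    exact (hθ2 r hr).const_mul 3
  have hs : sin (3 * θ r) ^ 2 + deriv h r ^ 2 = 1 := by
    rw [hE1 r hr]
    exact sin_sq_add_cos_sq _
  have hh'' := deriv_deriv_eq_neg_sin_mul (φ := fun y => 3 * θ y) hU hr hE1 (hφ r hr)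
  have hflux := deriv_mul_sin_mul_solitonFlux (κ := deriv k) hU hr (hh1 r hr) (hφ r hr) hE1
    (hE3 r hr)
  have hflux' := deriv_deriv_mul_sin_mul_solitonFlux hU hr hh1 (hh2 r hr) (hh3 r hr) hφ hφ'
    (hk2 r hr) hE1 (hE2 r hr) hE3
  exact third_order_ode_of_flux_relations hs hh'' hflux hflux'

/-- The final reduction of the nearly Kähler soliton system to a single third
order nonlinear ODE for `h`, valid whenever `h' = cos 3θ` is nowhere zero. -/
theorem nk_soliton_third_order_ode
    (a b lam : ℝ) (h θ k : ℝ → ℝ)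
    (I : Set ℝ) (hI : I = Set.Ioo a b)
    (hpos : ∀ r ∈ I, 0 < h r)
    (hh1 : ∀ r ∈ I, DifferentiableAt ℝ h r)
    (hh2 : ∀ r ∈ I, DifferentiableAt ℝ (deriv h) r)
    (hh3 : ∀ r ∈ I, DifferentiableAt ℝ (deriv (deriv h)) r)
    (hθ1 : ∀ r ∈ I, DifferentiableAt ℝ θ r)
    (hθ2 : ∀ r ∈ I, DifferentiableAt ℝ (deriv θ) r)
    (hk1 : ∀ r ∈ I, DifferentiableAt ℝ k r)
    (hk2 : ∀ r ∈ I, DifferentiableAt ℝ (deriv k) r)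
    (hE1 : ∀ r ∈ I, deriv h r = Real.cos (3 * θ r))
    (hne : ∀ r ∈ I, deriv h r ≠ 0)
    (hE2 : ∀ r ∈ I,
      deriv (deriv (fun x => (h x) ^ 3 * Real.sin (3 * θ x))) r
        - 12 * h r * Real.sin (3 * θ r) - lam * (h r) ^ 3 * Real.sin (3 * θ r)
        - deriv (fun x => deriv k x * (h x) ^ 3 * Real.sin (3 * θ x)) r = 0)
    (hE3 : ∀ r ∈ I,
      deriv (fun x => (h x) ^ 3 * Real.cos (3 * θ x)) r
        - 3 * (h r) ^ 2 - (lam / 4) * (h r) ^ 4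
        - deriv k r * (h r) ^ 3 * Real.cos (3 * θ r) = 0) :
    ∀ r ∈ I,
      (h r) ^ 3 * (deriv h r) ^ 3 * deriv (deriv (deriv h)) r
        - (h r) ^ 3 * deriv h r * deriv (deriv (deriv h)) r
        - 2 * (h r) ^ 3 * (deriv h r) ^ 2 * (deriv (deriv h) r) ^ 2
        + 3 * (h r) ^ 2 * (deriv h r) ^ 4 * deriv (deriv h) r
        - 6 * h r * (deriv h r) ^ 2
        + (h r) ^ 3 * (deriv (deriv h) r) ^ 2
        - 3 * (h r) ^ 2 * deriv (deriv h) r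
        + 12 * h r * (deriv h r) ^ 4
        - 6 * h r * (deriv h r) ^ 6
        + (lam / 4) * (h r) ^ 4 * (deriv h r) ^ 2 * deriv (deriv h) r
        - (lam / 4) * (h r) ^ 4 * deriv (deriv h) r = 0 :=
  nk_soliton_third_order_ode_general a b lam h θ k I hI hh1 hh2 hh3 hθ1 hθ2 hk2 hE1 hE2 hE3
end
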